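/- Let n ≥ 2 and let P be a partial n-Metric on a set X. For all tuples (x_1,…,x_n), (y_1,…,y_n) ∈ X^n and every t ∈ {1,…,n}: P(x_1,…,x_n) ≤ P(y_1,…,y_t, x_{t+1},…,x_n) + Σ_{j=1}^{t} [P(y_j,…,y_j, x_j) − P(y_j,…,y_j)], where P(y_j,…,y_j,x_j) has n−1 copies of y_j and one x_j, and P(y_j,…,y_j) has n copies of y_j. -/

import Mathlib

/-- The `n`-tuple with `n − 1` copies of `a` and `b` in the last coordinate. -/
def repl {X : Type*} {n : ℕ} (a b : X) : Fin n → X :=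
  fun i => if i.val = n - 1 then b else a

/-- `P` is a partial n-𝔐etric on `X` (for `2 ≤ n`). -/
def IsPartialNMetric {X : Type*} {n : ℕ} (hn : 2 ≤ n) (P : (Fin n → X) → ℝ) : Prop :=
  (∀ x₁ x₂ : X, P (fun _ => x₁) ≤ P (repl x₁ x₂)) ∧
  (∀ (x : Fin n → X) (σ : Equiv.Perm (Fin n)), P (x ∘ σ) = P x) ∧
  (∀ x₁ x₂ : X,
    (P (repl x₁ x₂) = P (fun _ => x₁) ∧ P (repl x₂ x₁) = P (fun _ => x₂)) ↔ x₁ = x₂) ∧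
  (∀ (x : Fin n → X) (a : X),
    P x ≤ P (Function.update x ⟨n - 1, by omega⟩ a) + P (repl a (x ⟨n - 1, by omega⟩))
      - P (fun _ => a))

/-- Conjugating by the transposition of `k` with the last coordinate reduces this to `(Pn-inq)`. -/
lemma IsPartialNMetric.le_update {X : Type*} {n : ℕ} {hn : 2 ≤ n} {P : (Fin n → X) → ℝ}
    (hP : IsPartialNMetric hn P) (x : Fin n → X) (k : Fin n) (b : X) :
    P x ≤ P (Function.update x k b) + P (repl b (x k)) - P (fun _ => b) := by
  obtain ⟨-, hsym, -, hinq⟩ := hP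
  set last : Fin n := ⟨n - 1, by omega⟩
  have h := hinq (x ∘ Equiv.swap k last) b
  have hlast : (x ∘ Equiv.swap k last) last = x k := by simp
  have hupdate : Function.update (x ∘ Equiv.swap k last) last b
      = Function.update x k b ∘ Equiv.swap k last := by
    rw [Function.update_comp_equiv, Equiv.symm_swap, Equiv.swap_apply_left]
  rwa [hsym, hlast, hupdate, hsym] at h

lemma IsPartialNMetric.le_piecewise {X : Type*} {n : ℕ} {hn : 2 ≤ n} {P : (Fin n → X) → ℝ}
    (hP : IsPartialNMetric hn P) (x y : Fin n → X) (s : Finset (Fin n)) :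
    P x ≤ P (s.piecewise y x) + ∑ j ∈ s, (P (repl (y j) (x j)) - P (fun _ => y j)) := by
  induction s using Finset.induction_on with
  | empty => simp
  | insert k s hk ih =>
    have hstep := hP.le_update (s.piecewise y x) k (y k)
    rw [Finset.piecewise_eq_of_notMem _ _ _ hk, ← Finset.piecewise_insert] at hstep
    rw [Finset.sum_insert hk]
    linarith

theorem partialNMetric_term_replacement_general {X : Type*} {n : ℕ} (hn : 2 ≤ n)
    (P : (Fin n → X) → ℝ) (hP : IsPartialNMetric hn P)
    (x y : Fin n → X) (t : ℕ) :
    P x ≤ P (fun i => if i.val < t then y i else x i) +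
      ∑ j ∈ Finset.univ.filter (fun j : Fin n => j.val < t),
        (P (repl (y j) (x j)) - P (fun _ => y j)) := by
  have hprefix : (Finset.univ.filter fun j : Fin n => j.val < t).piecewise y x
      = fun i => if i.val < t then y i else x i := by
    ext i
    simp [Finset.piecewise]
  simpa only [hprefix] using hP.le_piecewise x y (Finset.univ.filter fun j : Fin n => j.val < t)

/-- Term replacement for partial n-𝔐etrics. -/
theorem partialNMetric_term_replacement {X : Type*} {n : ℕ} (hn : 2 ≤ n)
    (P : (Fin n → X) → ℝ) (hP : IsPartialNMetric hn P)
    (x y : Fin n → X) (t : ℕ) (ht1 : 1 ≤ t) (ht2 : t ≤ n) :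
    P x ≤ P (fun i => if i.val < t then y i else x i) +
      ∑ j ∈ Finset.univ.filter (fun j : Fin n => j.val < t),
        (P (repl (y j) (x j)) - P (fun _ => y j)) :=
  partialNMetric_term_replacement_general hn P hP x y t
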